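/- (Corollary.) For any n-round dynamic inference model, any contextual loss function ℓ : 𝒳 × 𝒴 × 𝒴̂ → ℝ, any i ∈ {1,…,n}, and any initial distribution P_{Xᵢ} on 𝒳 for round i, the minimum over all estimation strategies (ψᵢ,…,ψₙ) for rounds i through n of the expected accumulated loss E[Σ_{j=i}^n ℓ(Xⱼ, Yⱼ, Ŷⱼ)] equals E_{Xᵢ∼P_{Xᵢ}}[V*ᵢ(Xᵢ)], and this minimum is achieved by the dynamic-programming estimators (ψ*ᵢ,…,ψ*ₙ). -/

import Mathlib

noncomputable section

/-- Expectation of a real-valued function under a probability mass function on a finite type. -/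
def pexp {α : Type*} [Fintype α] (p : PMF α) (f : α → ℝ) : ℝ :=
  ∑ a, (p a).toReal * f a

/-- A (history-dependent) estimation strategy: the round-`i` estimator maps the current
observation `Xᵢ`, the past observations `X^{i-1}` and the past revealed quantities `Y^{i-1}`
(together forming `(X^i, Y^{i-1})`) to an estimate `Ŷᵢ`. -/
abbrev Strategy (𝓧 𝓨 𝓨h : Type*) : Type _ := ℕ → 𝓧 → List 𝓧 → List 𝓨 → 𝓨h

/-- The strategy induced by a sequence of Markov estimators `ψᵢ : 𝓧 → 𝓨h`. -/
def markovStrategy {𝓧 𝓨 𝓨h : Type*} (ψ : ℕ → 𝓧 → 𝓨h) : Strategy 𝓧 𝓨 𝓨h :=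
  fun i x _ _ => ψ i x

/-- Replace the round-`n` estimator of a strategy by another one. -/
def replaceRound {𝓧 𝓨 𝓨h : Type*} (ψ : Strategy 𝓧 𝓨 𝓨h) (n : ℕ)
    (ψn : Strategy 𝓧 𝓨 𝓨h) : Strategy 𝓧 𝓨 𝓨h :=
  fun i x hx hy => if i = n then ψn i x hx hy else ψ i x hx hy

/-- The observation-estimate loss `ℓ̄ᵢ(x, yh) = E_{Y ∼ νᵢ(x)}[ℓ(x, Y, yh)]`. -/
def lbar {𝓧 𝓨 𝓨h : Type*} [Fintype 𝓨] (ν : ℕ → 𝓧 → PMF 𝓨)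
    (ℓ : 𝓧 → 𝓨 → 𝓨h → ℝ) (i : ℕ) (x : 𝓧) (yh : 𝓨h) : ℝ :=
  pexp (ν i x) fun y => ℓ x y yh

/-- `lossFrom κ ν L ψ i m x hx hy` : expected accumulated loss over `m` rounds (rounds
`i, i+1, …, i+m-1`), starting at round `i` with current observation `x`, past observation
history `hx` and past quantity history `hy`, under the (possibly round-dependent) contextual
loss `L` and the strategy `ψ`.  The process evolves as `Yᵢ ∼ νᵢ(Xᵢ)` (conditionally
independent of everything else given `Xᵢ`), `Ŷᵢ = ψᵢ(X^i, Y^{i-1})`,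
`X_{i+1} ∼ κ_{i+1}(Xᵢ, Ŷᵢ)`. -/
def lossFrom {𝓧 𝓨 𝓨h : Type*} [Fintype 𝓧] [Fintype 𝓨]
    (κ : ℕ → 𝓧 → 𝓨h → PMF 𝓧) (ν : ℕ → 𝓧 → PMF 𝓨)
    (L : ℕ → 𝓧 → 𝓨 → 𝓨h → ℝ) (ψ : Strategy 𝓧 𝓨 𝓨h) :
    ℕ → ℕ → 𝓧 → List 𝓧 → List 𝓨 → ℝ
  | _, 0, _, _, _ => 0
  | i, m + 1, x, hx, hy =>
      pexp (ν i x) fun y =>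
        L i x y (ψ i x hx hy) +
          pexp (κ (i + 1) x (ψ i x hx hy)) fun x' =>
            lossFrom κ ν L ψ (i + 1) m x' (hx ++ [x]) (hy ++ [y])

/-- The inference loss `J(ψ) = E[∑_{i=1}^n ℓ(Xᵢ, Yᵢ, Ŷᵢ)]` of strategy `ψ` for the
`n`-round dynamic inference problem with initial distribution `P₁`. -/
def J {𝓧 𝓨 𝓨h : Type*} [Fintype 𝓧] [Fintype 𝓨] (P₁ : PMF 𝓧)
    (κ : ℕ → 𝓧 → 𝓨h → PMF 𝓧) (ν : ℕ → 𝓧 → PMF 𝓨)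
    (ℓ : 𝓧 → 𝓨 → 𝓨h → ℝ) (n : ℕ) (ψ : Strategy 𝓧 𝓨 𝓨h) : ℝ :=
  pexp P₁ fun x => lossFrom κ ν (fun _ => ℓ) ψ 1 n x [] []

/-- `Eat κ ν g ψ i s x hx hy` : the expectation `E[g(X_{i+s}, Y_{i+s}, Ŷ_{i+s})]` of a
single-round quantity at round `i + s`, for the process started at round `i` with current
observation `x` and histories `hx`, `hy`, run under the strategy `ψ`. -/
def Eat {𝓧 𝓨 𝓨h : Type*} [Fintype 𝓧] [Fintype 𝓨]
    (κ : ℕ → 𝓧 → 𝓨h → PMF 𝓧) (ν : ℕ → 𝓧 → PMF 𝓨)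
    (g : 𝓧 → 𝓨 → 𝓨h → ℝ) (ψ : Strategy 𝓧 𝓨 𝓨h) :
    ℕ → ℕ → 𝓧 → List 𝓧 → List 𝓨 → ℝ
  | i, 0, x, hx, hy => pexp (ν i x) fun y => g x y (ψ i x hx hy)
  | i, s + 1, x, hx, hy =>
      pexp (ν i x) fun y =>
        pexp (κ (i + 1) x (ψ i x hx hy)) fun x' =>
          Eat κ ν g ψ (i + 1) s x' (hx ++ [x]) (hy ++ [y])

/-- The dynamic-programming value function: `Vstar κ ν ℓ i m x` is `V*ᵢ(x)` when exactly `m`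
rounds follow round `i` (so round `i` is the last round iff `m = 0`):
`V*ᵢ(x) = min_{yh} Q*ᵢ(x, yh)`, with `Q*` as in `Qstar`. -/
def Vstar {𝓧 𝓨 𝓨h : Type*} [Fintype 𝓧] [Fintype 𝓨]
    (κ : ℕ → 𝓧 → 𝓨h → PMF 𝓧) (ν : ℕ → 𝓧 → PMF 𝓨)
    (ℓ : 𝓧 → 𝓨 → 𝓨h → ℝ) : ℕ → ℕ → 𝓧 → ℝ
  | i, 0, x => ⨅ yh, lbar ν ℓ i x yh
  | i, m + 1, x =>
      ⨅ yh, (lbar ν ℓ i x yh + pexp (κ (i + 1) x yh) fun x' => Vstar κ ν ℓ (i + 1) m x')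

/-- The dynamic-programming Q-function: `Qstar κ ν ℓ i m x yh` is `Q*ᵢ(x, yh)` when exactly `m`
rounds follow round `i`: `Q*ₙ(x,yh) = ℓ̄ₙ(x,yh)` in the last round, and otherwise
`Q*ᵢ(x,yh) = ℓ̄ᵢ(x,yh) + E_{x' ∼ κ_{i+1}(x,yh)}[V*_{i+1}(x')]`. -/
def Qstar {𝓧 𝓨 𝓨h : Type*} [Fintype 𝓧] [Fintype 𝓨]
    (κ : ℕ → 𝓧 → 𝓨h → PMF 𝓧) (ν : ℕ → 𝓧 → PMF 𝓨)
    (ℓ : 𝓧 → 𝓨 → 𝓨h → ℝ) : ℕ → ℕ → 𝓧 → 𝓨h → ℝ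
  | i, 0, x, yh => lbar ν ℓ i x yh
  | i, m + 1, x, yh =>
      lbar ν ℓ i x yh + pexp (κ (i + 1) x yh) fun x' => Vstar κ ν ℓ (i + 1) m x'

/-!
Backward induction on the number of remaining rounds. Given the history, the expected loss of the
remaining rounds is the immediate loss `ℓ̄ᵢ(x, ŷ)` of the current estimate plus the expected loss
of the following rounds from the next observation `x' ∼ κᵢ₊₁(x, ŷ)`. By induction the latter is at
least `V*ᵢ₊₁(x')`, whatever the history, so the total is at least `Q*ᵢ(x, ŷ) ≥ V*ᵢ(x)`. The
dynamic-programming estimators achieve equality at every step because the Markov strategy makes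
the continuation exactly `V*ᵢ₊₁` and `ψ*ᵢ(x)` attains the minimum of `Q*ᵢ(x, ·)`.
-/

section Pexp

variable {α : Type*} [Fintype α] (p : PMF α)

lemma pexp_mono {f g : α → ℝ} (h : ∀ a, f a ≤ g a) : pexp p f ≤ pexp p g :=
  Finset.sum_le_sum fun a _ => mul_le_mul_of_nonneg_left (h a) ENNReal.toReal_nonneg

lemma pexp_const (c : ℝ) : pexp p (fun _ => c) = c := by
  have hsum : ∑ a, (p a).toReal = 1 := by
    rw [← ENNReal.toReal_sum fun a _ => p.apply_ne_top a,
      ← tsum_fintype (L := .unconditional _), p.tsum_coe, ENNReal.toReal_one]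
  rw [pexp, ← Finset.sum_mul, hsum, one_mul]

lemma pexp_add (f g : α → ℝ) : pexp p (fun a => f a + g a) = pexp p f + pexp p g := by
  simp only [pexp, mul_add, Finset.sum_add_distrib]

end Pexp

section DynamicProgramming

variable {𝓧 𝓨 𝓨h : Type*} [Fintype 𝓧] [Fintype 𝓨]
  (κ : ℕ → 𝓧 → 𝓨h → PMF 𝓧) (ν : ℕ → 𝓧 → PMF 𝓨) (ℓ : 𝓧 → 𝓨 → 𝓨h → ℝ)

/-- Counts the `m` rounds from round `i` on, like `lossFrom`, whereas `Vstar i m` counts the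
rounds after round `i`. -/
def optLossFrom : ℕ → ℕ → 𝓧 → ℝ
  | _, 0, _ => 0
  | i, m + 1, x => Vstar κ ν ℓ i m x

lemma Qstar_eq_lbar_add (i m : ℕ) (x : 𝓧) (yh : 𝓨h) :
    Qstar κ ν ℓ i m x yh =
      lbar ν ℓ i x yh + pexp (κ (i + 1) x yh) (optLossFrom κ ν ℓ (i + 1) m) := by
  cases m with
  | zero =>
    rw [show optLossFrom κ ν ℓ (i + 1) 0 = fun _ => 0 from rfl, pexp_const, add_zero]
    rfl
  | succ m => rfl

lemma lossFrom_succ (ψ : Strategy 𝓧 𝓨 𝓨h) (i m : ℕ) (x : 𝓧) (hx : List 𝓧) (hy : List 𝓨) :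
    lossFrom κ ν (fun _ => ℓ) ψ i (m + 1) x hx hy =
      lbar ν ℓ i x (ψ i x hx hy) + pexp (ν i x) fun y =>
        pexp (κ (i + 1) x (ψ i x hx hy)) fun x' =>
          lossFrom κ ν (fun _ => ℓ) ψ (i + 1) m x' (hx ++ [x]) (hy ++ [y]) := by
  rw [lossFrom, pexp_add]
  rfl

lemma Vstar_eq_iInf_Qstar (i m : ℕ) (x : 𝓧) :
    Vstar κ ν ℓ i m x = ⨅ yh, Qstar κ ν ℓ i m x yh := by
  cases m <;> rfl

lemma Vstar_le_Qstar [Finite 𝓨h] (i m : ℕ) (x : 𝓧) (yh : 𝓨h) :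
    Vstar κ ν ℓ i m x ≤ Qstar κ ν ℓ i m x yh := by
  rw [Vstar_eq_iInf_Qstar]
  exact ciInf_le (Finite.bddBelow_range _) yh

lemma Vstar_eq_Qstar_of_forall_le [Finite 𝓨h] {i m : ℕ} {x : 𝓧} {a : 𝓨h}
    (ha : ∀ yh, Qstar κ ν ℓ i m x a ≤ Qstar κ ν ℓ i m x yh) :
    Vstar κ ν ℓ i m x = Qstar κ ν ℓ i m x a := by
  have : Nonempty 𝓨h := ⟨a⟩
  refine le_antisymm (Vstar_le_Qstar κ ν ℓ i m x a) ?_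
  rw [Vstar_eq_iInf_Qstar]
  exact le_ciInf ha

lemma optLossFrom_le_lossFrom [Finite 𝓨h] (ψ : Strategy 𝓧 𝓨 𝓨h) (m : ℕ) :
    ∀ i x hx hy, optLossFrom κ ν ℓ i m x ≤ lossFrom κ ν (fun _ => ℓ) ψ i m x hx hy := by
  induction m with
  | zero => intro i x hx hy; exact le_rfl
  | succ m ih =>
    intro i x hx hy
    set a := ψ i x hx hy
    calc optLossFrom κ ν ℓ i (m + 1) x
        ≤ Qstar κ ν ℓ i m x a := Vstar_le_Qstar κ ν ℓ i m x a
      _ = lbar ν ℓ i x a + pexp (ν i x) fun _ =>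
            pexp (κ (i + 1) x a) (optLossFrom κ ν ℓ (i + 1) m) := by
          rw [Qstar_eq_lbar_add, pexp_const]
      _ ≤ lbar ν ℓ i x a + pexp (ν i x) fun y => pexp (κ (i + 1) x a) fun x' =>
            lossFrom κ ν (fun _ => ℓ) ψ (i + 1) m x' (hx ++ [x]) (hy ++ [y]) :=
          add_le_add le_rfl <| pexp_mono _ fun y => pexp_mono _ fun x' =>
            ih (i + 1) x' (hx ++ [x]) (hy ++ [y])
      _ = lossFrom κ ν (fun _ => ℓ) ψ i (m + 1) x hx hy := (lossFrom_succ κ ν ℓ ψ i m x hx hy).symm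

lemma lossFrom_markovStrategy_eq_optLossFrom [Finite 𝓨h] {n i₀ : ℕ} {ψstar : ℕ → 𝓧 → 𝓨h}
    (hstar : ∀ j, i₀ ≤ j → j ≤ n → ∀ x : 𝓧, ∀ yh : 𝓨h,
      Qstar κ ν ℓ j (n - j) x (ψstar j x) ≤ Qstar κ ν ℓ j (n - j) x yh) (m : ℕ) :
    ∀ i, i₀ ≤ i → i + m = n + 1 → ∀ x hx hy,
      lossFrom κ ν (fun _ => ℓ) (markovStrategy ψstar) i m x hx hy = optLossFrom κ ν ℓ i m x := by
  induction m with
  | zero => intro i _ _ x hx hy; rfl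
  | succ m ih =>
    intro i hi₀ hn x hx hy
    have hopt := hstar i hi₀ (by omega) x
    rw [show n - i = m by omega] at hopt
    calc lossFrom κ ν (fun _ => ℓ) (markovStrategy ψstar) i (m + 1) x hx hy
        = lbar ν ℓ i x (ψstar i x) + pexp (ν i x) fun _ =>
            pexp (κ (i + 1) x (ψstar i x)) (optLossFrom κ ν ℓ (i + 1) m) := by
          rw [lossFrom_succ]
          congr 2
          funext y
          congr 1
          funext x'
          exact ih (i + 1) (by omega) (by omega) x' _ _
      _ = Qstar κ ν ℓ i m x (ψstar i x) := by rw [Qstar_eq_lbar_add, pexp_const]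
      _ = optLossFrom κ ν ℓ i (m + 1) x := (Vstar_eq_Qstar_of_forall_le κ ν ℓ hopt).symm

end DynamicProgramming

theorem min_accumulated_loss_eq_expected_Vstar_general {𝓧 𝓨 𝓨h : Type*} [Fintype 𝓧] [Fintype 𝓨]
    [Fintype 𝓨h]
    (κ : ℕ → 𝓧 → 𝓨h → PMF 𝓧) (ν : ℕ → 𝓧 → PMF 𝓨) (ℓ : 𝓧 → 𝓨 → 𝓨h → ℝ)
    (n i : ℕ) (hin : i ≤ n) (Pᵢ : PMF 𝓧)
    (ψstar : ℕ → 𝓧 → 𝓨h)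
    (hstar : ∀ j, i ≤ j → j ≤ n → ∀ x : 𝓧, ∀ yh : 𝓨h,
      Qstar κ ν ℓ j (n - j) x (ψstar j x) ≤ Qstar κ ν ℓ j (n - j) x yh) :
    IsLeast
        (Set.range fun ψ : Strategy 𝓧 𝓨 𝓨h =>
          pexp Pᵢ fun x => lossFrom κ ν (fun _ => ℓ) ψ i (n - i + 1) x [] [])
        (pexp Pᵢ fun x => Vstar κ ν ℓ i (n - i) x) ∧
      (pexp Pᵢ fun x =>
          lossFrom κ ν (fun _ => ℓ) (markovStrategy ψstar) i (n - i + 1) x [] []) =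
        pexp Pᵢ fun x => Vstar κ ν ℓ i (n - i) x := by
  have hψstar : (pexp Pᵢ fun x =>
      lossFrom κ ν (fun _ => ℓ) (markovStrategy ψstar) i (n - i + 1) x [] []) =
      pexp Pᵢ fun x => Vstar κ ν ℓ i (n - i) x := by
    congr 1
    funext x
    exact lossFrom_markovStrategy_eq_optLossFrom κ ν ℓ hstar _ i le_rfl (by omega) x [] []
  refine ⟨⟨⟨markovStrategy ψstar, hψstar⟩, ?_⟩, hψstar⟩
  rintro _ ⟨ψ, rfl⟩
  exact pexp_mono _ fun x => optLossFrom_le_lossFrom κ ν ℓ ψ (n - i + 1) i x [] []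

/-- **Corollary.** For any `n`-round dynamic inference model, contextual loss
`ℓ`, round `i ∈ {1,…,n}` and any initial distribution `Pᵢ` for round `i`: the minimum, over
all history-dependent strategies for rounds `i` through `n`, of the expected accumulated loss
`E[∑_{j=i}^n ℓ(Xⱼ, Yⱼ, Ŷⱼ)]` (with `Xᵢ ∼ Pᵢ`) equals `E[V*ᵢ(Xᵢ)]`, and this minimum is
achieved by the dynamic-programming estimators `ψstar` (any Markov strategy with `ψstar j x`
a minimiser of `Q*ⱼ(x, ·)` for `j ∈ {i,…,n}`). -/
theorem min_accumulated_loss_eq_expected_Vstar {𝓧 𝓨 𝓨h : Type*} [Fintype 𝓧] [Nonempty 𝓧] [Fintype 𝓨] [Nonempty 𝓨]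
    [Fintype 𝓨h] [Nonempty 𝓨h]
    (κ : ℕ → 𝓧 → 𝓨h → PMF 𝓧) (ν : ℕ → 𝓧 → PMF 𝓨) (ℓ : 𝓧 → 𝓨 → 𝓨h → ℝ)
    (n i : ℕ) (hi1 : 1 ≤ i) (hin : i ≤ n) (Pᵢ : PMF 𝓧)
    (ψstar : ℕ → 𝓧 → 𝓨h)
    (hstar : ∀ j, i ≤ j → j ≤ n → ∀ x : 𝓧, ∀ yh : 𝓨h,
      Qstar κ ν ℓ j (n - j) x (ψstar j x) ≤ Qstar κ ν ℓ j (n - j) x yh) :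
    IsLeast
        (Set.range fun ψ : Strategy 𝓧 𝓨 𝓨h =>
          pexp Pᵢ fun x => lossFrom κ ν (fun _ => ℓ) ψ i (n - i + 1) x [] [])
        (pexp Pᵢ fun x => Vstar κ ν ℓ i (n - i) x) ∧
      (pexp Pᵢ fun x =>
          lossFrom κ ν (fun _ => ℓ) (markovStrategy ψstar) i (n - i + 1) x [] []) =
        pexp Pᵢ fun x => Vstar κ ν ℓ i (n - i) x :=
  min_accumulated_loss_eq_expected_Vstar_general κ ν ℓ n i hin Pᵢ ψstar hstar

end
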